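/- arXiv:1701.00112 — 4 statements merged into one kernel-verified Lean document; each statement's English description precedes it below -/
import Mathlib

section
/- Fix real numbers c1, c2 > 0, s, κ̄ with κ̄ ≥ 0 and 3s^2 ≤ 3 + κ̄. Set K = 3 + κ̄, c3 = s·c2^{3/2}, c4 = κ̄·c2^2, α = √(c2·K/12), and define the pentanomial probabilities p1 = (K + s√(3K))/(4K^2), p2 = (K − s√(3K))/(2K^2), p3 = (3 + 2κ̄)/(2K), p4 = (K + s√(3K))/(2K^2), p5 = (K − s√(3K))/(4K^2). Let Y be the random variable taking the value c1 + (6 − 2l)·α with probability p_l for l = 1, …, 5 (i.e. values c1 + 4α, c1 + 2α, c1, c1 − 2α, c1 − 4α). Then E[Y] = c1, E[(Y − c1)^2] = c2, E[(Y − c1)^3] = c3 and E[(Y − c1)^4] = 3c2^2 + c4, i.e. the increment of the pentanomial tree matches the first four cumulants c1, c2, c3, c4 exactly. -/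
/-- The pentanomial tree increment `Y = c1 + (6 - 2l)·α`, `l = 1,…,5`, with the transition
probabilities `p1,…,p5` determined by the skewness `s` and excess kurtosis `κ̄`, matches the
first four cumulants `c1, c2, c3 = s·c2^{3/2}, c4 = κ̄·c2^2` exactly:
`E[Y] = c1`, `E[(Y-c1)^2] = c2`, `E[(Y-c1)^3] = c3`, `E[(Y-c1)^4] = 3c2^2 + c4`. -/
theorem pentanomial_moment_matching
    (c1 c2 s kbar K c3 c4 α p1 p2 p3 p4 p5 : ℝ)
    (hc2 : 0 < c2) (hkbar : 0 ≤ kbar) (hs : 3 * s ^ 2 ≤ 3 + kbar)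
    (hK : K = 3 + kbar)
    (hc3 : c3 = s * c2 ^ ((3 : ℝ) / 2))
    (hc4 : c4 = kbar * c2 ^ 2)
    (hα : α = Real.sqrt (c2 * K / 12))
    (hp1 : p1 = (K + s * Real.sqrt (3 * K)) / (4 * K ^ 2))
    (hp2 : p2 = (K - s * Real.sqrt (3 * K)) / (2 * K ^ 2))
    (hp3 : p3 = (3 + 2 * kbar) / (2 * K))
    (hp4 : p4 = (K + s * Real.sqrt (3 * K)) / (2 * K ^ 2))
    (hp5 : p5 = (K - s * Real.sqrt (3 * K)) / (4 * K ^ 2)) :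
    (p1 * (c1 + 4 * α) + p2 * (c1 + 2 * α) + p3 * c1 +
        p4 * (c1 - 2 * α) + p5 * (c1 - 4 * α) = c1) ∧
    (p1 * (4 * α) ^ 2 + p2 * (2 * α) ^ 2 + p3 * (0 : ℝ) ^ 2 +
        p4 * (-2 * α) ^ 2 + p5 * (-4 * α) ^ 2 = c2) ∧
    (p1 * (4 * α) ^ 3 + p2 * (2 * α) ^ 3 + p3 * (0 : ℝ) ^ 3 +
        p4 * (-2 * α) ^ 3 + p5 * (-4 * α) ^ 3 = c3) ∧
    (p1 * (4 * α) ^ 4 + p2 * (2 * α) ^ 4 + p3 * (0 : ℝ) ^ 4 +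
        p4 * (-2 * α) ^ 4 + p5 * (-4 * α) ^ 4 = 3 * c2 ^ 2 + c4) := by
  have hKpos : (0 : ℝ) < K := by rw [hK]; linarith
  have hKne : K ≠ 0 := ne_of_gt hKpos
  have hα2 : α ^ 2 = c2 * K / 12 := by
    rw [hα, Real.sq_sqrt]
    positivity
  have h32 : c2 ^ ((3 : ℝ) / 2) = c2 * Real.sqrt c2 := by
    rw [Real.sqrt_eq_rpow, show ((3 : ℝ) / 2) = 1 + 1 / 2 by norm_num,
      Real.rpow_add hc2, Real.rpow_one]
  set q : ℝ := Real.sqrt (3 * K) with hq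
  set r : ℝ := Real.sqrt c2 with hr
  have hr2 : r ^ 2 = c2 := Real.sq_sqrt hc2.le
  have hαq : α * q = r * K / 2 := by
    have key : c2 * K / 12 * (3 * K) = (r * K / 2) ^ 2 := by
      rw [div_pow, mul_pow, hr, Real.sq_sqrt hc2.le]; ring
    rw [hα, hq, ← Real.sqrt_mul (by positivity), key,
      Real.sqrt_sq (by positivity)]
  subst hp1 hp2 hp3 hp4 hp5 hc3 hc4
  refine ⟨?_, ?_, ?_, ?_⟩
  · have e1 : ((K + s * q) / (4 * K ^ 2)) * (c1 + 4 * α) +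
        ((K - s * q) / (2 * K ^ 2)) * (c1 + 2 * α) +
        ((3 + 2 * kbar) / (2 * K)) * c1 +
        ((K + s * q) / (2 * K ^ 2)) * (c1 - 2 * α) +
        ((K - s * q) / (4 * K ^ 2)) * (c1 - 4 * α) =
        c1 * ((6 + 2 * kbar) / (2 * K)) := by
      field_simp; ring
    have h1 : (6 + 2 * kbar) / (2 * (3 + kbar)) = 1 := by
      rw [div_eq_one_iff_eq (by positivity)]; ring
    rw [e1, hK, h1, mul_one]
  · have e2 : ((K + s * q) / (4 * K ^ 2)) * (4 * α) ^ 2 +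
        ((K - s * q) / (2 * K ^ 2)) * (2 * α) ^ 2 +
        ((3 + 2 * kbar) / (2 * K)) * (0 : ℝ) ^ 2 +
        ((K + s * q) / (2 * K ^ 2)) * (-2 * α) ^ 2 +
        ((K - s * q) / (4 * K ^ 2)) * (-4 * α) ^ 2 =
        α ^ 2 * (12 / K) := by
      field_simp; ring
    rw [e2, hα2]; field_simp
  · have e3 : ((K + s * q) / (4 * K ^ 2)) * (4 * α) ^ 3 +
        ((K - s * q) / (2 * K ^ 2)) * (2 * α) ^ 3 +
        ((3 + 2 * kbar) / (2 * K)) * (0 : ℝ) ^ 3 +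
        ((K + s * q) / (2 * K ^ 2)) * (-2 * α) ^ 3 +
        ((K - s * q) / (4 * K ^ 2)) * (-4 * α) ^ 3 =
        α ^ 2 * (α * q) * (24 * s) / K ^ 2 := by
      field_simp; ring
    rw [e3, hα2, hαq, h32]; field_simp; ring
  · have e4 : ((K + s * q) / (4 * K ^ 2)) * (4 * α) ^ 4 +
        ((K - s * q) / (2 * K ^ 2)) * (2 * α) ^ 4 +
        ((3 + 2 * kbar) / (2 * K)) * (0 : ℝ) ^ 4 +
        ((K + s * q) / (2 * K ^ 2)) * (-2 * α) ^ 4 +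
        ((K - s * q) / (4 * K ^ 2)) * (-4 * α) ^ 4 =
        (α ^ 2) ^ 2 * (144 / K) := by
      field_simp; ring
    rw [e4, hα2, hK]; field_simp; ring
end

section
/- If κ̄ ≥ 0 and 3s^2 ≤ 3 + κ̄, then, setting K = 3 + κ̄, each of the five quantities p1 = (K + s√(3K))/(4K^2), p2 = (K − s√(3K))/(2K^2), p3 = (3 + 2κ̄)/(2K), p4 = (K + s√(3K))/(2K^2), p5 = (K − s√(3K))/(4K^2) lies in the interval [0, 1]; hence the choice α(Δt) = √(c2)√((3 + κ̄)/12) yields genuine (nonnegative) transition probabilities for the pentanomial tree. -/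
/-- If the excess kurtosis `κ̄` is nonnegative and the skewness `s` satisfies `3 s^2 ≤ 3 + κ̄`,
then each of the five pentanomial transition probabilities lies in `[0, 1]`. -/
theorem pentanomial_probabilities_nonneg
    (s kbar K p1 p2 p3 p4 p5 : ℝ)
    (hkbar : 0 ≤ kbar) (hs : 3 * s ^ 2 ≤ 3 + kbar)
    (hK : K = 3 + kbar)
    (hp1 : p1 = (K + s * Real.sqrt (3 * K)) / (4 * K ^ 2))
    (hp2 : p2 = (K - s * Real.sqrt (3 * K)) / (2 * K ^ 2))
    (hp3 : p3 = (3 + 2 * kbar) / (2 * K))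
    (hp4 : p4 = (K + s * Real.sqrt (3 * K)) / (2 * K ^ 2))
    (hp5 : p5 = (K - s * Real.sqrt (3 * K)) / (4 * K ^ 2)) :
    (0 ≤ p1 ∧ p1 ≤ 1) ∧ (0 ≤ p2 ∧ p2 ≤ 1) ∧ (0 ≤ p3 ∧ p3 ≤ 1) ∧
      (0 ≤ p4 ∧ p4 ≤ 1) ∧ (0 ≤ p5 ∧ p5 ≤ 1) := by

  have hK3 : (3:ℝ) ≤ K := by linarith
  have hKpos : (0:ℝ) < K := by linarith
  set r := Real.sqrt (3 * K) with hr
  have hr2 : r ^ 2 = 3 * K := Real.sq_sqrt (by positivity)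
  have hrnn : 0 ≤ r := Real.sqrt_nonneg _
  have hub : s * r ≤ K := by nlinarith [sq_nonneg (s * r - K), sq_nonneg (s * r + K), sq_nonneg s]
  have hlb : -K ≤ s * r := by nlinarith [sq_nonneg (s * r - K), sq_nonneg (s * r + K), sq_nonneg s]
  have hden4 : (0:ℝ) < 4 * K ^ 2 := by positivity
  have hden2 : (0:ℝ) < 2 * K ^ 2 := by positivity
  have hden : (0:ℝ) < 2 * K := by positivity
  refine ⟨⟨?_, ?_⟩, ⟨?_, ?_⟩, ⟨?_, ?_⟩, ⟨?_, ?_⟩, ⟨?_, ?_⟩⟩ <;>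
    subst hp1 hp2 hp3 hp4 hp5 <;>
    first
    | exact div_nonneg (by linarith) (by positivity)
    | (rw [div_le_one (by positivity)]; nlinarith)
end

section
/- Fix real numbers c2 > 0, c3, c4 and α > 0, and define the weights p1 = (1/(192α^4))·[(3/2)c2^2 − 2c2·α^2 + 2c3·α + (1/2)c4], p2 = (1/(192α^4))·[−6c2^2 + 32c2·α^2 − 4c3·α − 2c4], p3 = 1 + (1/(192α^4))·[3c4 + 9c2^2 − 60c2·α^2], p4 = (1/(192α^4))·[−6c2^2 + 32c2·α^2 + 4c3·α − 2c4], p5 = (1/(192α^4))·[(3/2)c2^2 − 2c2·α^2 − 2c3·α + (1/2)c4]. Then these weights solve the moment-matching system: (i) p1 + p2 + p3 + p4 + p5 = 1; (ii) Σ_{l=1}^5 p_l·(6 − 2l)·α = 0; (iii) Σ_{l=1}^5 p_l·((6 − 2l)·α)^2 = c2; (iv) Σ_{l=1}^5 p_l·((6 − 2l)·α)^3 = c3; (v) Σ_{l=1}^5 p_l·((6 − 2l)·α)^4 = 3c2^2 + c4. -/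
/-- The weights obtained by solving the moment-matching linear system for the pentanomial tree
(with corrected normalizing constant `192`) satisfy the moment-matching conditions:
they sum to one, the jump part `(6-2l)·α` has mean `0`, second moment `c2`, third moment `c3`
and fourth moment `3 c2^2 + c4`. -/
theorem pentanomial_weights_solve_moment_matching_system
    (c2 c3 c4 α p1 p2 p3 p4 p5 : ℝ)
    (hc2 : 0 < c2) (hα : 0 < α)
    (hp1 : p1 = 1 / (192 * α ^ 4) *
      ((3 / 2) * c2 ^ 2 - 2 * c2 * α ^ 2 + 2 * c3 * α + (1 / 2) * c4))
    (hp2 : p2 = 1 / (192 * α ^ 4) *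
      (-6 * c2 ^ 2 + 32 * c2 * α ^ 2 - 4 * c3 * α - 2 * c4))
    (hp3 : p3 = 1 + 1 / (192 * α ^ 4) *
      (3 * c4 + 9 * c2 ^ 2 - 60 * c2 * α ^ 2))
    (hp4 : p4 = 1 / (192 * α ^ 4) *
      (-6 * c2 ^ 2 + 32 * c2 * α ^ 2 + 4 * c3 * α - 2 * c4))
    (hp5 : p5 = 1 / (192 * α ^ 4) *
      ((3 / 2) * c2 ^ 2 - 2 * c2 * α ^ 2 - 2 * c3 * α + (1 / 2) * c4)) :
    (p1 + p2 + p3 + p4 + p5 = 1) ∧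
    (p1 * (4 * α) + p2 * (2 * α) + p3 * (0 : ℝ) + p4 * (-2 * α) + p5 * (-4 * α) = 0) ∧
    (p1 * (4 * α) ^ 2 + p2 * (2 * α) ^ 2 + p3 * (0 : ℝ) ^ 2 +
        p4 * (-2 * α) ^ 2 + p5 * (-4 * α) ^ 2 = c2) ∧
    (p1 * (4 * α) ^ 3 + p2 * (2 * α) ^ 3 + p3 * (0 : ℝ) ^ 3 +
        p4 * (-2 * α) ^ 3 + p5 * (-4 * α) ^ 3 = c3) ∧
    (p1 * (4 * α) ^ 4 + p2 * (2 * α) ^ 4 + p3 * (0 : ℝ) ^ 4 +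
        p4 * (-2 * α) ^ 4 + p5 * (-4 * α) ^ 4 = 3 * c2 ^ 2 + c4) := by
  have hα4 : α ^ 4 ≠ 0 := by positivity
  subst hp1 hp2 hp3 hp4 hp5
  refine ⟨by field_simp; ring, by field_simp; ring, by field_simp; ring,
    by field_simp; ring, by field_simp; ring⟩
end

section
/- Let σ > 0, κ > 0, θ ∈ ℝ and let ν be the measure on ℝ \ {0} with density ν(x) = (1/(κ|x|))·exp(θx/σ^2 − (|x|/σ)·√(2/κ + θ^2/σ^2}). Then x^2 is ν-integrable and ∫_ℝ x^2·ν(x) dx = σ^2 + θ^2·κ; that is, the second moment of the Variance Gamma Lévy measure equals the second cumulant c2 of the VG process at t = 1. -/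
open MeasureTheory Set

/-- `∫ x in (0,∞), x e^{-cx} dx = 1/c²`, with integrability. -/
lemma vg_aux_exp (c : ℝ) (hc : 0 < c) :
    IntegrableOn (fun x : ℝ => x * Real.exp (-(c * x))) (Ioi 0) ∧
    ∫ x in Ioi 0, x * Real.exp (-(c * x)) = 1 / c ^ 2 := by
  constructor
  · have h := integrableOn_rpow_mul_exp_neg_mul_rpow (s := 1) (p := 1) (b := c)
      (by norm_num) one_pos hc
    refine h.congr_fun (fun x hx => ?_) measurableSet_Ioi
    simp [Real.rpow_one, neg_mul]
  · have h := Real.integral_rpow_mul_exp_neg_mul_Ioi (a := 2) (r := c) two_pos hc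
    rw [show ((2 : ℝ) - 1) = 1 by norm_num] at h
    rw [show ∫ x in Ioi (0:ℝ), x * Real.exp (-(c * x))
          = ∫ t in Ioi (0:ℝ), t ^ (1:ℝ) * Real.exp (-(c * t)) from
        setIntegral_congr_fun measurableSet_Ioi (fun x hx => by
          rw [Real.rpow_one]),
      h, show Real.Gamma 2 = 1 by
        rw [show (2:ℝ) = 1 + 1 by norm_num, Real.Gamma_add_one one_ne_zero,
          Real.Gamma_one, mul_one]]
    rw [show ((1:ℝ)/c) ^ (2:ℝ) = (1/c)^(2:ℕ) by
      rw [← Real.rpow_natCast (1/c) 2]; norm_num]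
    rw [div_pow, one_pow, mul_one]

/-- The second moment of the Variance Gamma Lévy measure
`ν(x) = (1/(κ|x|)) exp(θx/σ² - (|x|/σ)√(2/κ + θ²/σ²))` is finite and equals the
second cumulant of the VG process at `t = 1`. -/
theorem varianceGamma_levyMeasure_second_moment
    (σ κ θ : ℝ) (hσ : 0 < σ) (hκ : 0 < κ) :
    Integrable (fun x : ℝ => x ^ 2 *
        (1 / (κ * |x|) *
          Real.exp (θ * x / σ ^ 2 - |x| / σ * Real.sqrt (2 / κ + θ ^ 2 / σ ^ 2)))) ∧
      ∫ x : ℝ, x ^ 2 *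
        (1 / (κ * |x|) *
          Real.exp (θ * x / σ ^ 2 - |x| / σ * Real.sqrt (2 / κ + θ ^ 2 / σ ^ 2))) =
        σ ^ 2 + θ ^ 2 * κ := by
  set S : ℝ := 2 / κ + θ ^ 2 / σ ^ 2 with hSdef
  have hS : 0 ≤ S := by positivity
  set A : ℝ := Real.sqrt S / σ with hAdef
  set b : ℝ := θ / σ ^ 2 with hbdef
  have hA0 : 0 ≤ A := by positivity
  have hA2 : A ^ 2 = 2 / (κ * σ ^ 2) + b ^ 2 := by
    rw [hAdef, div_pow, Real.sq_sqrt hS, hbdef, hSdef]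
    field_simp
  have hpos : 0 < 2 / (κ * σ ^ 2) := by positivity
  set α : ℝ := A - b with hαdef
  set β : ℝ := A + b with hβdef
  have hα : 0 < α := by nlinarith [sq_nonneg (A - b), sq_nonneg (A + b)]
  have hβ : 0 < β := by nlinarith [sq_nonneg (A - b), sq_nonneg (A + b)]
  have hαβ : α * β = 2 / (κ * σ ^ 2) := by
    have : α * β = A ^ 2 - b ^ 2 := by ring
    rw [this, hA2]; ring
  -- rewrite the integrand
  have key : ∀ x : ℝ, x ^ 2 *
      (1 / (κ * |x|) * Real.exp (θ * x / σ ^ 2 - |x| / σ * Real.sqrt S)) =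
      (1 / κ) * (|x| * Real.exp (b * x - A * |x|)) := by
    intro x
    have hexp : θ * x / σ ^ 2 - |x| / σ * Real.sqrt S = b * x - A * |x| := by
      rw [hbdef, hAdef]; ring
    rw [hexp]
    rcases eq_or_ne x 0 with h | h
    · simp [h]
    · have hx : |x| ≠ 0 := abs_ne_zero.mpr h
      field_simp
      rw [← sq_abs x]
  set g : ℝ → ℝ := fun x => |x| * Real.exp (b * x - A * |x|) with hgdef
  have key' : (fun x : ℝ => x ^ 2 *
      (1 / (κ * |x|) * Real.exp (θ * x / σ ^ 2 - |x| / σ * Real.sqrt S)))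
      = fun x => (1 / κ) * g x := funext key
  obtain ⟨hintα, hvalα⟩ := vg_aux_exp α hα
  obtain ⟨hintβ, hvalβ⟩ := vg_aux_exp β hβ
  -- positive side
  have hEqPos : EqOn g (fun x => x * Real.exp (-(α * x))) (Ioi 0) := by
    intro x hx
    have hx0 : (0:ℝ) < x := hx
    rw [hgdef]
    simp only
    rw [abs_of_pos hx0]
    congr 1
    rw [hαdef]; ring_nf
  have hgpos : IntegrableOn g (Ioi 0) :=
    (hintα.congr_fun (fun x hx => (hEqPos hx).symm) measurableSet_Ioi)
  have hgposval : ∫ x in Ioi 0, g x = 1 / α ^ 2 := by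
    rw [setIntegral_congr_fun measurableSet_Ioi hEqPos, hvalα]
  -- negative side
  have hEqNeg : EqOn g (fun x => (-x) * Real.exp (-(β * (-x)))) (Iic 0) := by
    intro x hx
    have hx0 : x ≤ 0 := hx
    rw [hgdef]
    simp only
    rw [abs_of_nonpos hx0]
    congr 1
    rw [hβdef]; ring_nf
  have hintβ' : IntegrableOn (fun x : ℝ => x * Real.exp (-(β * x))) (Ici 0) :=
    Iff.mpr integrableOn_Ici_iff_integrableOn_Ioi hintβ
  have hgneg : IntegrableOn g (Iic 0) := by
    have hcomp : IntegrableOn (fun x : ℝ => (-x) * Real.exp (-(β * (-x)))) (Iic 0) := by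
      rw [← (Measure.measurePreserving_neg (volume : Measure ℝ)).integrableOn_comp_preimage
          (Homeomorph.neg ℝ).measurableEmbedding] at hintβ'
      simp only [Function.comp_def, neg_preimage, neg_Ici, neg_zero] at hintβ'
      exact hintβ'
    exact hcomp.congr_fun (fun x hx => (hEqNeg hx).symm) measurableSet_Iic
  have hgnegval : ∫ x in Iic 0, g x = 1 / β ^ 2 := by
    rw [setIntegral_congr_fun measurableSet_Iic hEqNeg]
    have h := integral_comp_neg_Iic (0:ℝ) (fun t => t * Real.exp (-(β * t)))
    rw [neg_zero] at h
    rw [show (∫ x in Iic (0:ℝ), (-x) * Real.exp (-(β * (-x))))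
          = ∫ x in Iic (0:ℝ), (fun t => t * Real.exp (-(β * t))) (-x) from rfl, h]
    exact hvalβ
  -- combine
  have hg_int : Integrable g := by
    rw [← integrableOn_univ, ← Iic_union_Ioi (a := (0:ℝ)), integrableOn_union]
    exact ⟨hgneg, hgpos⟩
  have hsum : α ^ 2 + β ^ 2 = 4 / (κ * σ ^ 2) + 4 * b ^ 2 := by
    have h2 : α ^ 2 + β ^ 2 = 2 * A ^ 2 + 2 * b ^ 2 := by
      rw [hαdef, hβdef]; ring
    rw [h2, hA2]; ring
  have hg_val : ∫ x, g x = 1 / β ^ 2 + 1 / α ^ 2 := by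
    rw [← intervalIntegral.integral_Iic_add_Ioi hgneg hgpos, hgnegval, hgposval]
  clear_value S A b α β g
  constructor
  · rw [key']
    exact hg_int.const_mul _
  · calc ∫ x : ℝ, x ^ 2 *
          (1 / (κ * |x|) * Real.exp (θ * x / σ ^ 2 - |x| / σ * Real.sqrt S))
        = ∫ x : ℝ, (1 / κ) * g x := by rw [key']
      _ = (1 / κ) * ∫ x : ℝ, g x := integral_const_mul _ _
      _ = (1 / κ) * (1 / β ^ 2 + 1 / α ^ 2) := by rw [hg_val]
      _ = σ ^ 2 + θ ^ 2 * κ := by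
          have hα' : α ≠ 0 := ne_of_gt hα
          have hβ' : β ≠ 0 := ne_of_gt hβ
          have e1 : 1 / β ^ 2 + 1 / α ^ 2 = (α ^ 2 + β ^ 2) / ((α * β) ^ 2) := by
            rw [div_add_div _ _ (pow_ne_zero 2 hβ') (pow_ne_zero 2 hα'), mul_pow]
            congr 1 <;> ring
          rw [e1, hsum, hαβ, hbdef]
          field_simp
          ring
end
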